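/- The minimum Euclidean distance of the lattice L_{O_K} = τ(O_K), the image of the ring of integers O_K under the canonical embedding τ, is exactly √m, where m = [K:ℚ]. -/

import Mathlib

open scoped BigOperators
open MeasureTheory

noncomputable section

/-- The index set for `ℝ^{s+2t}`: `s` real coordinates and `t` pairs of coordinates. -/
abbrev PackIdx (s t : ℕ) := Fin s ⊕ Fin t × Fin 2

/-- The canonical embedding `τ : K → ℝ^{s+2t}`,
`τ(α) = (ρ₁(α),…,ρ_s(α), √2·Re σ₁(α), √2·Im σ₁(α), …, √2·Re σ_t(α), √2·Im σ_t(α))`. -/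
def tauEmb {K : Type*} [Field K] {s t : ℕ}
    (ρ : Fin s → (K →+* ℝ)) (σ : Fin t → (K →+* ℂ)) (α : K) :
    EuclideanSpace ℝ (PackIdx s t) :=
  (EuclideanSpace.equiv (PackIdx s t) ℝ).symm <|
    Sum.elim (fun i => ρ i α)
      (fun p => if p.2 = (0 : Fin 2) then Real.sqrt 2 * (σ p.1 α).re
                else Real.sqrt 2 * (σ p.1 α).im)

/-- The system of `s + 2t` field embeddings `K → ℂ` determined by the data `ρ, σ`:
the real embeddings `ρᵢ` and the complex embeddings `σⱼ` together with their conjugates. -/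
def embSystem {K : Type*} [Field K] {s t : ℕ}
    (ρ : Fin s → (K →+* ℝ)) (σ : Fin t → (K →+* ℂ)) : PackIdx s t → (K →+* ℂ) :=
  Sum.elim (fun i => Complex.ofRealHom.comp (ρ i))
    (fun p => if p.2 = (0 : Fin 2) then σ p.1 else (starRingEnd ℂ).comp (σ p.1))

/-- `ρ, σ` list exactly the real embeddings and the pairs of complex-conjugate embeddings
of `K`, without repetition: the associated system of `s+2t` embeddings `K → ℂ` is a
bijective enumeration of all field embeddings `K → ℂ`. -/
def IsEmbSystem {K : Type*} [Field K] {s t : ℕ}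
    (ρ : Fin s → (K →+* ℝ)) (σ : Fin t → (K →+* ℂ)) : Prop :=
  Function.Bijective (embSystem ρ σ)

/-- The minimum (infimal) Euclidean distance between two distinct points of `P`. -/
def minDist {E : Type*} [MetricSpace E] (P : Set E) : ℝ :=
  sInf {d : ℝ | ∃ x ∈ P, ∃ y ∈ P, x ≠ y ∧ dist x y = d}

/-- The volume `V_N` of the unit ball in `ℝ^N` (with index set `ι`, `N = |ι|`). -/
def unitBallVol (ι : Type*) [Fintype ι] : ℝ :=
  (volume (Metric.ball (0 : EuclideanSpace ℝ ι) 1)).toReal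

/-- The packing density
`Δ(P) = limsup_{R→∞} |P ∩ B(R)| · r^N · V_N / vol(B(R+r))`, where `r = d_E(P)/2`. -/
def packDensity {ι : Type*} [Fintype ι] (P : Set (EuclideanSpace ℝ ι)) : ℝ :=
  Filter.limsup (fun R : ℝ =>
    (Nat.card (P ∩ Metric.closedBall 0 R : Set (EuclideanSpace ℝ ι)) : ℝ) *
      (minDist P / 2) ^ (Fintype.card ι) * unitBallVol ι /
      (volume (Metric.closedBall (0 : EuclideanSpace ℝ ι) (R + minDist P / 2))).toReal)
    Filter.atTop

/-- `L_I = τ(I)`, the image in `ℝ^{s+2t}` of an ideal `I` of the ring of integers under the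
canonical embedding. -/
def idealImage {K : Type*} [Field K] [NumberField K] {s t : ℕ}
    (ρ : Fin s → (K →+* ℝ)) (σ : Fin t → (K →+* ℂ))
    (I : Ideal (NumberField.RingOfIntegers K)) : Set (EuclideanSpace ℝ (PackIdx s t)) :=
  (fun a : NumberField.RingOfIntegers K =>
    tauEmb ρ σ (algebraMap (NumberField.RingOfIntegers K) K a)) '' (I : Set _)

/-- The coordinatewise extension `τ : K^n → ℝ^{mn}`. -/
def tauEmbN {K : Type*} [Field K] {s t : ℕ} {n : ℕ}
    (ρ : Fin s → (K →+* ℝ)) (σ : Fin t → (K →+* ℂ)) (c : Fin n → K) :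
    EuclideanSpace ℝ (Fin n × PackIdx s t) :=
  (EuclideanSpace.equiv (Fin n × PackIdx s t) ℝ).symm fun p => tauEmb ρ σ (c p.1) p.2

/-- The Cartesian product `L^n ⊆ ℝ^{mn}` of `n` copies of `L ⊆ ℝ^m`. -/
def prodSet {ι : Type*} (n : ℕ) (L : Set (EuclideanSpace ℝ ι)) :
    Set (EuclideanSpace ℝ (Fin n × ι)) :=
  {x | ∀ j : Fin n,
    ((EuclideanSpace.equiv ι ℝ).symm fun i => (EuclideanSpace.equiv (Fin n × ι) ℝ) x (j, i)) ∈ L}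

/-- `S` is a valid alphabet set at level `i`: a set of `q` elements of `p^i` containing `0`
whose residues modulo `p^{i+1}` represent the `q` distinct elements of `p^i/p^{i+1}`. -/
def IsRepSet {K : Type*} [Field K] [NumberField K]
    (p : Ideal (NumberField.RingOfIntegers K)) (i q : ℕ)
    (S : Set (NumberField.RingOfIntegers K)) : Prop :=
  S ⊆ (p ^ i : Ideal (NumberField.RingOfIntegers K)) ∧ (0 : NumberField.RingOfIntegers K) ∈ S ∧
    Nat.card S = q ∧
    (∀ x ∈ S, ∀ y ∈ S, x ≠ y → x - y ∉ (p ^ (i + 1) : Ideal (NumberField.RingOfIntegers K))) ∧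
    (∀ z ∈ (p ^ i : Ideal (NumberField.RingOfIntegers K)), ∃ a ∈ S,
      z - a ∈ (p ^ (i + 1) : Ideal (NumberField.RingOfIntegers K)))

/-- Hamming distance between two words. -/
def hDist {n : ℕ} {A : Type*} (u v : Fin n → A) : ℕ := Nat.card {j : Fin n // u j ≠ v j}

/-- The minimum Hamming distance of a code `C`. -/
def codeMinDist {n : ℕ} {A : Type*} (C : Set (Fin n → A)) : ℕ :=
  sInf {d : ℕ | ∃ u ∈ C, ∃ v ∈ C, u ≠ v ∧ hDist u v = d}

/-- `C` is an `(n, M, d)`-code over the alphabet set `S`. -/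
def IsCode {A : Type*} {n : ℕ} (S : Set A) (M d : ℕ) (C : Set (Fin n → A)) : Prop :=
  (∀ c ∈ C, ∀ j, c j ∈ S) ∧ Nat.card C = M ∧ codeMinDist C = d

/-- The translate `τ(c) + P` of `P` by the embedded codeword `c`. -/
def wordTranslate {K : Type*} [Field K] [NumberField K] {s t n : ℕ}
    (ρ : Fin s → (K →+* ℝ)) (σ : Fin t → (K →+* ℂ))
    (c : Fin n → NumberField.RingOfIntegers K)
    (P : Set (EuclideanSpace ℝ (Fin n × PackIdx s t))) :
    Set (EuclideanSpace ℝ (Fin n × PackIdx s t)) :=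
  {z | ∃ x ∈ P, z = tauEmbN ρ σ (fun j => algebraMap (NumberField.RingOfIntegers K) K (c j)) + x}

/-- The concatenation `τ(C) + P = { τ(c) + p : c ∈ C, p ∈ P }`. -/
def codeTranslate {K : Type*} [Field K] [NumberField K] {s t n : ℕ}
    (ρ : Fin s → (K →+* ℝ)) (σ : Fin t → (K →+* ℂ))
    (C : Set (Fin n → NumberField.RingOfIntegers K))
    (P : Set (EuclideanSpace ℝ (Fin n × PackIdx s t))) :
    Set (EuclideanSpace ℝ (Fin n × PackIdx s t)) :=
  {z | ∃ c ∈ C, ∃ x ∈ P,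
    z = tauEmbN ρ σ (fun j => algebraMap (NumberField.RingOfIntegers K) K (c j)) + x}

/-- The concatenation `τ(𝒞) + P = { Σ_{i<ℓ} τ(cᵢ) + p : cᵢ ∈ Cᵢ, p ∈ P }` of a family of codes. -/
def famTranslate {K : Type*} [Field K] [NumberField K] {s t n ℓ : ℕ}
    (ρ : Fin s → (K →+* ℝ)) (σ : Fin t → (K →+* ℂ))
    (C : Fin ℓ → Set (Fin n → NumberField.RingOfIntegers K))
    (P : Set (EuclideanSpace ℝ (Fin n × PackIdx s t))) :
    Set (EuclideanSpace ℝ (Fin n × PackIdx s t)) :=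
  {z | ∃ c : Fin ℓ → (Fin n → NumberField.RingOfIntegers K), (∀ i, c i ∈ C i) ∧ ∃ x ∈ P,
    z = (∑ i : Fin ℓ,
      tauEmbN ρ σ (fun j => algebraMap (NumberField.RingOfIntegers K) K (c i j))) + x}


/-!
Summing the squares of the coordinates of `τ(γ)` pairs each `√2·Re σⱼ(γ)`, `√2·Im σⱼ(γ)` into
`|σⱼ(γ)|² + |σ̄ⱼ(γ)|²`, so `‖τ(γ)‖² = Σ_φ |φ(γ)|²` over all `m` embeddings `φ : K → ℂ`.
For a nonzero algebraic integer `γ` the product of these `m` terms is `N(γ)² ≥ 1`, so by AM–GM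
their sum is at least `m`, with equality at `γ = 1`. As `τ` is additive, the distance between
`τ(a)` and `τ(b)` is `‖τ(a - b)‖`.
-/

open NumberField

theorem card_le_sum_of_one_le_prod {ι : Type*} [Fintype ι] {z : ι → ℝ} (hz : ∀ i, 0 ≤ z i)
    (hprod : 1 ≤ ∏ i, z i) : (Fintype.card ι : ℝ) ≤ ∑ i, z i := by
  rcases isEmpty_or_nonempty ι with hι | hι
  · simp
  have hcard : (0 : ℝ) < Fintype.card ι := by exact_mod_cast Fintype.card_pos
  have amgm := Real.geom_mean_le_arith_mean Finset.univ (fun _ => 1) z (fun _ _ => zero_le_one)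
    (by simpa using hcard) (fun i _ => hz i)
  simp only [Real.rpow_one, Finset.sum_const, Finset.card_univ, nsmul_eq_mul, mul_one,
    one_mul] at amgm
  rw [le_div_iff₀ hcard] at amgm
  have := Real.one_le_rpow hprod (inv_nonneg.mpr hcard.le)
  nlinarith

theorem prod_norm_embeddings_eq_abs_norm {K : Type*} [Field K] [NumberField K] (x : K) :
    ∏ φ : K →+* ℂ, ‖φ x‖ = |(Algebra.norm ℚ x : ℝ)| := by
  rw [Fintype.prod_equiv (RingHom.equivRatAlgHom K ℂ) (fun φ => ‖φ x‖) (fun f => ‖f x‖)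
    fun _ => by simp [RingHom.equivRatAlgHom_apply], ← norm_prod,
    ← Algebra.norm_eq_prod_embeddings, eq_ratCast, ← Complex.ofReal_ratCast, Complex.norm_real,
    Real.norm_eq_abs]

theorem one_le_abs_norm_of_ne_zero {K : Type*} [Field K] [NumberField K] {x : 𝓞 K} (hx : x ≠ 0) :
    1 ≤ |(Algebra.norm ℚ (x : K) : ℝ)| := by
  rw [← Algebra.coe_norm_int, Rat.cast_intCast, ← Int.cast_abs, ← Int.cast_one, Int.cast_le]
  exact Int.one_le_abs (Algebra.norm_ne_zero_iff.mpr hx)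

theorem finrank_le_sum_norm_embeddings_sq {K : Type*} [Field K] [NumberField K] {x : 𝓞 K}
    (hx : x ≠ 0) : (Module.finrank ℚ K : ℝ) ≤ ∑ φ : K →+* ℂ, ‖φ x‖ ^ 2 := by
  rw [← Embeddings.card K ℂ]
  refine card_le_sum_of_one_le_prod (fun _ => sq_nonneg _) ?_
  rw [Finset.prod_pow, prod_norm_embeddings_eq_abs_norm]
  exact one_le_pow₀ (one_le_abs_norm_of_ne_zero hx)

section CanonicalEmbedding

variable {K : Type*} [Field K] {s t : ℕ} (ρ : Fin s → (K →+* ℝ)) (σ : Fin t → (K →+* ℂ))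

theorem tauEmb_sub (a b : K) : tauEmb ρ σ (a - b) = tauEmb ρ σ a - tauEmb ρ σ b := by
  ext (i | ⟨j, k⟩)
  · simp [tauEmb]
  · by_cases hk : k = 0 <;> simp [tauEmb, hk, mul_sub]

theorem dist_tauEmb (a b : K) : dist (tauEmb ρ σ a) (tauEmb ρ σ b) = ‖tauEmb ρ σ (a - b)‖ := by
  rw [dist_eq_norm, tauEmb_sub]

theorem norm_tauEmb_sq_eq_sum_embSystem (x : K) :
    ‖tauEmb ρ σ x‖ ^ 2 = ∑ i, ‖embSystem ρ σ i x‖ ^ 2 := by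
  have h2 : Real.sqrt 2 ^ 2 = 2 := Real.sq_sqrt zero_le_two
  rw [EuclideanSpace.norm_sq_eq, Fintype.sum_sum_type, Fintype.sum_sum_type,
    Fintype.sum_prod_type, Fintype.sum_prod_type]
  congr 1
  · simp [tauEmb, embSystem]
  · refine Finset.sum_congr rfl fun j _ => ?_
    simp [tauEmb, embSystem, Fin.sum_univ_two, Complex.sq_norm, Complex.normSq_apply, mul_pow, h2]
    ring

variable [NumberField K]

theorem norm_tauEmb_sq (hemb : IsEmbSystem ρ σ) (x : K) :
    ‖tauEmb ρ σ x‖ ^ 2 = ∑ φ : K →+* ℂ, ‖φ x‖ ^ 2 := by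
  rw [norm_tauEmb_sq_eq_sum_embSystem]
  exact Fintype.sum_bijective _ hemb _ _ fun _ => rfl

theorem norm_tauEmb_one (hemb : IsEmbSystem ρ σ) :
    ‖tauEmb ρ σ 1‖ = Real.sqrt (Module.finrank ℚ K) := by
  rw [← Real.sqrt_sq (norm_nonneg _), norm_tauEmb_sq ρ σ hemb]
  simp [Embeddings.card]

theorem sqrt_finrank_le_norm_tauEmb (hemb : IsEmbSystem ρ σ) {x : 𝓞 K} (hx : x ≠ 0) :
    Real.sqrt (Module.finrank ℚ K) ≤ ‖tauEmb ρ σ x‖ := by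
  rw [Real.sqrt_le_left (norm_nonneg _), norm_tauEmb_sq ρ σ hemb]
  exact finrank_le_sum_norm_embeddings_sq hx

end CanonicalEmbedding

theorem statement3_general {K : Type*} [Field K] [NumberField K] {s t m : ℕ}
    (ρ : Fin s → (K →+* ℝ)) (σ : Fin t → (K →+* ℂ)) (hemb : IsEmbSystem ρ σ)
    (hdeg : m = Module.finrank ℚ K) :
    minDist (idealImage ρ σ (⊤ : Ideal (NumberField.RingOfIntegers K))) = Real.sqrt (m : ℝ) := by
  subst hdeg
  have dist_one_zero : dist (tauEmb ρ σ (1 : 𝓞 K)) (tauEmb ρ σ (0 : 𝓞 K)) =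
      Real.sqrt (Module.finrank ℚ K) := by
    simpa [dist_tauEmb] using norm_tauEmb_one ρ σ hemb
  refine IsLeast.csInf_eq ⟨⟨_, ⟨1, trivial, rfl⟩, _, ⟨0, trivial, rfl⟩, ?_, dist_one_zero⟩, ?_⟩
  · rw [← dist_ne_zero, dist_one_zero]
    exact (Real.sqrt_pos.mpr (Nat.cast_pos.mpr Module.finrank_pos)).ne'
  · rintro d ⟨_, ⟨a, -, rfl⟩, _, ⟨b, -, rfl⟩, hne, rfl⟩
    have hab : a - b ≠ 0 := sub_ne_zero.mpr fun h => hne (h ▸ rfl)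
    rw [dist_tauEmb, ← map_sub]
    exact sqrt_finrank_le_norm_tauEmb ρ σ hemb hab

/-- The minimum Euclidean distance of the lattice `L_{O_K} = τ(O_K)`
is exactly `√m`, where `m = [K:ℚ]`. -/
theorem statement3 {K : Type*} [Field K] [NumberField K] {s t m : ℕ}
    (ρ : Fin s → (K →+* ℝ)) (σ : Fin t → (K →+* ℂ)) (hemb : IsEmbSystem ρ σ)
    (hm : m = s + 2 * t) (hdeg : m = Module.finrank ℚ K) :
    minDist (idealImage ρ σ (⊤ : Ideal (NumberField.RingOfIntegers K))) = Real.sqrt (m : ℝ) :=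
  statement3_general ρ σ hemb hdeg

end
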